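/- For the triangular lattice with nearest-neighbor pair interactions given by V₀ ∈ C²((0,∞)), the atomistic and modified Legendre–Hadamard stability constants at the uniform dilation M(t) = tM coincide: λ_atom(M(t)) = λ̃_LH(M(t)) = ½(V₀''(t) + V₀'(t)/t) − ¼|V₀''(t) − V₀'(t)/t|. -/

import Mathlib

/-!
With `a = V₀'(t)/t` and `b = V₀''(t)`, both quotients have the form `a + (b - a) s` with
`s = ∑ w_ρ (Mρ·ξ)² / (|ξ|² ∑ w_ρ)` for bond weights `w_ρ ≥ 0`: `w_ρ = (ρ·η)²` for `λ̃_LH`, and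
`w_ρ = |e^{iρ·k} - 1|² = (ρ·x)² + (ρ·y)²` for `λ_atom`, where `x + iy = e^{ik} - 1` componentwise.
For the weights `(ρ·η)²` two sums of squares give `1/4 ≤ s ≤ 3/4`, with both ends attained at
`η = (-2, 0)`, so `λ̃_LH = ½(a + b) - ¼|b - a|`. The atomistic quotient is a mediant of the
Legendre–Hadamard quotients at `x` and `y`, hence no smaller, and `k = (π, 0)` gives `x = (-2, 0)`,
`y = 0`.
-/

open Real

noncomputable section

/-- The nearest-neighbour directions of the triangular lattice in lattice
coordinates: `𝓡 = {±e₁, ±e₂, ±(e₂−e₁)}`. -/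
def triR : Finset (Fin 2 → ℤ) :=
  {![1, 0], ![-1, 0], ![0, 1], ![0, -1], ![-1, 1], ![1, -1]}

/-- The lattice basis matrix `M` of the triangular lattice. -/
def triM : Matrix (Fin 2) (Fin 2) ℝ :=
  !![1, 1/2; 0, Real.sqrt 3 / 2]

/-- `Mρ ∈ ℝ²`. -/
def triMvec (ρ : Fin 2 → ℤ) : Fin 2 → ℝ :=
  triM.mulVec (fun i => (ρ i : ℝ))

/-- The Hessian `K(t) = D²W_atom((tMρ)_ρ)` of the pair-potential energy at the
uniform dilation `M(t) = tM`:
`K_{jρlσ} = δ_{ρσ}((V₀'(t)/t)(δ_{jl} − (Mρ)_j(Mρ)_l) + V₀''(t)(Mρ)_j(Mρ)_l)`. -/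
def triK (a b : ℝ) : Fin 2 → ↥triR → Fin 2 → ↥triR → ℝ :=
  fun j ρ l σ =>
    if ρ = σ then
      a * ((if j = l then 1 else 0) - triMvec ρ.1 j * triMvec ρ.1 l) +
        b * (triMvec ρ.1 j * triMvec ρ.1 l)
    else 0

/-- `ρ·k`. -/
def ipk (ρ : Fin 2 → ℤ) (k : Fin 2 → ℝ) : ℝ :=
  ∑ i, (ρ i : ℝ) * k i

/-- `K[ξ⊗v, ξ⊗v]`. -/
def Qform (K : Fin 2 → ↥triR → Fin 2 → ↥triR → ℝ) (ξ : Fin 2 → ℝ)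
    (v : ↥triR → ℝ) : ℝ :=
  ∑ j, ∑ l, ∑ ρ : ↥triR, ∑ σ : ↥triR, K j ρ l σ * (ξ j * v ρ) * (ξ l * v σ)

/-- The atomistic stability constant (cosine/sine representation). -/
def lamAtomCS (K : Fin 2 → ↥triR → Fin 2 → ↥triR → ℝ) : ℝ :=
  sInf { r : ℝ | ∃ (ξ k : Fin 2 → ℝ), ξ ≠ 0 ∧ k ≠ 0 ∧
    (∀ i, k i ∈ Set.Ico 0 (2 * π)) ∧
    r = (Qform K ξ (fun ρ => Real.cos (ipk ρ.1 k) - 1) +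
          Qform K ξ (fun ρ => Real.sin (ipk ρ.1 k))) /
        ((∑ i, (ξ i) ^ 2) *
          ((∑ ρ : ↥triR, (Real.cos (ipk ρ.1 k) - 1) ^ 2) +
            (∑ ρ : ↥triR, (Real.sin (ipk ρ.1 k)) ^ 2))) }

/-- The modified Legendre–Hadamard constant `λ̃_LH`. -/
def lamTildeLH (K : Fin 2 → ↥triR → Fin 2 → ↥triR → ℝ) : ℝ :=
  sInf { r : ℝ | ∃ ξ η : Fin 2 → ℝ, ξ ≠ 0 ∧ η ≠ 0 ∧
    r = Qform K ξ (fun ρ => ipk ρ.1 η) /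
        ((∑ i, (ξ i) ^ 2) * (∑ ρ : ↥triR, (ipk ρ.1 η) ^ 2)) }

def lamTri (a b : ℝ) : ℝ :=
  1 / 2 * (b + a) - 1 / 4 * |b - a|

def bondStretch (ξ η : Fin 2 → ℝ) : ℝ :=
  ∑ ρ : ↥triR, ipk ρ.1 η ^ 2 * (triMvec ρ.1 ⬝ᵥ ξ) ^ 2

lemma sum_triR (f : (Fin 2 → ℤ) → ℝ) :
    ∑ ρ : ↥triR, f ρ.1 =
      f ![1, 0] + f ![-1, 0] + f ![0, 1] + f ![0, -1] + f ![-1, 1] + f ![1, -1] := by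
  rw [Finset.sum_coe_sort triR f, triR, Finset.sum_insert (by decide), Finset.sum_insert (by decide),
    Finset.sum_insert (by decide), Finset.sum_insert (by decide), Finset.sum_insert (by decide),
    Finset.sum_singleton]
  ring

lemma ipk_cons (m n : ℤ) (k : Fin 2 → ℝ) : ipk ![m, n] k = m * k 0 + n * k 1 := by
  simp [ipk, Fin.sum_univ_two]

lemma triMvec_cons_dotProduct (m n : ℤ) (ξ : Fin 2 → ℝ) :
    triMvec ![m, n] ⬝ᵥ ξ = (m + n / 2) * ξ 0 + √3 / 2 * n * ξ 1 := by
  simp only [triMvec, triM, Matrix.mulVec, dotProduct, Fin.sum_univ_two, Matrix.of_apply,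
    Matrix.cons_val', Matrix.cons_val_zero, Matrix.cons_val_one, Matrix.cons_val_fin_one]
  ring

lemma Qform_triK (a b : ℝ) (ξ : Fin 2 → ℝ) (v : ↥triR → ℝ) :
    Qform (triK a b) ξ v =
      ∑ ρ : ↥triR, v ρ ^ 2 * (a * ∑ i, ξ i ^ 2 + (b - a) * (triMvec ρ.1 ⬝ᵥ ξ) ^ 2) := by
  simp only [Qform, triK, ite_mul, zero_mul, Finset.sum_ite_eq, Finset.mem_univ, if_true]
  rw [Finset.sum_comm, Finset.sum_congr rfl fun j _ => Finset.sum_comm, Finset.sum_comm]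
  refine Finset.sum_congr rfl fun ρ _ => ?_
  simp only [Fin.sum_univ_two, dotProduct, ↓reduceIte, one_ne_zero, zero_ne_one]
  ring

lemma Qform_triK_ipk (a b : ℝ) (ξ η : Fin 2 → ℝ) :
    Qform (triK a b) ξ (fun ρ => ipk ρ.1 η) =
      a * ((∑ i, ξ i ^ 2) * ∑ ρ : ↥triR, ipk ρ.1 η ^ 2) + (b - a) * bondStretch ξ η := by
  rw [Qform_triK, bondStretch]
  conv_rhs => rw [Finset.mul_sum, Finset.mul_sum, Finset.mul_sum, ← Finset.sum_add_distrib]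
  exact Finset.sum_congr rfl fun ρ _ => by ring

lemma sum_triR_ipk_sq (η : Fin 2 → ℝ) :
    ∑ ρ : ↥triR, ipk ρ.1 η ^ 2 = 2 * (η 0 ^ 2 + η 1 ^ 2 + (η 1 - η 0) ^ 2) := by
  rw [sum_triR (fun ρ => ipk ρ η ^ 2)]
  simp only [ipk_cons]
  push_cast
  ring

lemma bondStretch_eq (ξ η : Fin 2 → ℝ) :
    bondStretch ξ η = 2 * (η 0 ^ 2 * ξ 0 ^ 2 + η 1 ^ 2 * (ξ 0 / 2 + √3 / 2 * ξ 1) ^ 2 +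
      (η 1 - η 0) ^ 2 * (ξ 0 / 2 - √3 / 2 * ξ 1) ^ 2) := by
  rw [bondStretch, sum_triR (fun ρ => ipk ρ η ^ 2 * (triMvec ρ ⬝ᵥ ξ) ^ 2)]
  simp only [ipk_cons, triMvec_cons_dotProduct]
  push_cast
  ring

/- As the `Mρ` are unit vectors, `bondStretch ξ η / |ξ|²` is a Rayleigh quotient of the tensor
`∑ (ρ·η)² Mρ ⊗ Mρ` of trace `∑ (ρ·η)²`; these two identities put its eigenvalues between `1/4` and
`3/4` of the trace. -/
lemma four_mul_bondStretch_sub (ξ η : Fin 2 → ℝ) :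
    4 * bondStretch ξ η - (∑ i, ξ i ^ 2) * ∑ ρ : ↥triR, ipk ρ.1 η ^ 2 =
      2 * (√3 * η 0 * ξ 0 + (2 * η 1 - η 0) * ξ 1) ^ 2 := by
  rw [bondStretch_eq, sum_triR_ipk_sq, Fin.sum_univ_two]
  linear_combination (2 * (η 1 ^ 2 + (η 1 - η 0) ^ 2) * ξ 1 ^ 2 - 2 * η 0 ^ 2 * ξ 0 ^ 2) *
    Real.sq_sqrt (show (0 : ℝ) ≤ 3 by norm_num)

lemma three_mul_sub_four_mul_bondStretch (ξ η : Fin 2 → ℝ) :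
    3 * ((∑ i, ξ i ^ 2) * ∑ ρ : ↥triR, ipk ρ.1 η ^ 2) - 4 * bondStretch ξ η =
      2 * ((2 * η 1 - η 0) * ξ 0 - √3 * η 0 * ξ 1) ^ 2 := by
  rw [bondStretch_eq, sum_triR_ipk_sq, Fin.sum_univ_two]
  linear_combination (-2 * (η 1 ^ 2 + (η 1 - η 0) ^ 2) * ξ 1 ^ 2 - 2 * η 0 ^ 2 * ξ 1 ^ 2) *
    Real.sq_sqrt (show (0 : ℝ) ≤ 3 by norm_num)

lemma abs_bondStretch_sub_half_le (ξ η : Fin 2 → ℝ) :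
    |bondStretch ξ η - (∑ i, ξ i ^ 2) * (∑ ρ : ↥triR, ipk ρ.1 η ^ 2) / 2| ≤
      (∑ i, ξ i ^ 2) * (∑ ρ : ↥triR, ipk ρ.1 η ^ 2) / 4 := by
  have lower := four_mul_bondStretch_sub ξ η
  have upper := three_mul_sub_four_mul_bondStretch ξ η
  rw [abs_sub_le_iff]
  constructor <;> nlinarith [sq_nonneg (√3 * η 0 * ξ 0 + (2 * η 1 - η 0) * ξ 1),
    sq_nonneg ((2 * η 1 - η 0) * ξ 0 - √3 * η 0 * ξ 1)]

lemma lamTri_mul_le {a b E P : ℝ} (h : |P - E / 2| ≤ E / 4) :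
    lamTri a b * E ≤ a * E + (b - a) * P := by
  have h₁ := neg_abs_le ((b - a) * (P - E / 2))
  have h₂ := mul_le_mul_of_nonneg_left h (abs_nonneg (b - a))
  rw [abs_mul] at h₁
  unfold lamTri
  linarith

lemma lamTri_mul_le_Qform (a b : ℝ) (ξ η : Fin 2 → ℝ) :
    lamTri a b * ((∑ i, ξ i ^ 2) * ∑ ρ : ↥triR, ipk ρ.1 η ^ 2) ≤
      Qform (triK a b) ξ (fun ρ => ipk ρ.1 η) := by
  rw [Qform_triK_ipk]
  exact lamTri_mul_le (abs_bondStretch_sub_half_le ξ η)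

lemma sum_sq_pos_of_ne_zero {ι : Type*} [Fintype ι] {ξ : ι → ℝ} (h : ξ ≠ 0) : 0 < ∑ i, ξ i ^ 2 := by
  obtain ⟨i, hi⟩ := Function.ne_iff.1 h
  exact Finset.sum_pos' (fun j _ => sq_nonneg (ξ j)) ⟨i, Finset.mem_univ i, sq_pos_of_ne_zero hi⟩

lemma sum_triR_ipk_sq_pos {η : Fin 2 → ℝ} (h : η ≠ 0) : 0 < ∑ ρ : ↥triR, ipk ρ.1 η ^ 2 := by
  have hη := sum_sq_pos_of_ne_zero h
  rw [Fin.sum_univ_two] at hη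
  rw [sum_triR_ipk_sq]
  linarith [sq_nonneg (η 1 - η 0)]

lemma exists_lamTri_eq_div (a b : ℝ) : ∃ ξ : Fin 2 → ℝ, ξ ≠ 0 ∧
    lamTri a b = Qform (triK a b) ξ (fun ρ => ipk ρ.1 ![-2, 0]) /
      ((∑ i, ξ i ^ 2) * ∑ ρ : ↥triR, ipk ρ.1 ![-2, 0] ^ 2) := by
  suffices ∃ ξ : Fin 2 → ℝ, ξ ≠ 0 ∧ Qform (triK a b) ξ (fun ρ => ipk ρ.1 ![-2, 0]) =
      lamTri a b * ((∑ i, ξ i ^ 2) * ∑ ρ : ↥triR, ipk ρ.1 ![-2, 0] ^ 2) by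
    obtain ⟨ξ, hξ, h⟩ := this
    exact ⟨ξ, hξ, eq_div_of_mul_eq (mul_pos (sum_sq_pos_of_ne_zero hξ)
      (sum_triR_ipk_sq_pos (by simp))).ne' h.symm⟩
  -- each `ξ` makes the square in the matching identity above vanish
  rcases le_total a b with hab | hab
  · refine ⟨![1, √3], by simp, ?_⟩
    have h := four_mul_bondStretch_sub ![1, √3] ![-2, 0]
    simp only [Matrix.cons_val_zero, Matrix.cons_val_one, Matrix.cons_val_fin_one] at h
    rw [Qform_triK_ipk, lamTri, abs_of_nonneg (sub_nonneg.2 hab)]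
    linear_combination (b - a) / 4 * h
  · refine ⟨![√3, -1], by simp, ?_⟩
    have h := three_mul_sub_four_mul_bondStretch ![√3, -1] ![-2, 0]
    simp only [Matrix.cons_val_zero, Matrix.cons_val_one, Matrix.cons_val_fin_one] at h
    rw [Qform_triK_ipk, lamTri, abs_of_nonpos (sub_nonpos.2 hab)]
    linear_combination (a - b) / 4 * h

lemma lamTildeLH_triK (a b : ℝ) : lamTildeLH (triK a b) = lamTri a b := by
  refine IsLeast.csInf_eq ⟨?_, ?_⟩
  · obtain ⟨ξ, hξ, h⟩ := exists_lamTri_eq_div a b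
    exact ⟨ξ, _, hξ, by simp, h⟩
  · rintro r ⟨ξ, η, hξ, hη, rfl⟩
    exact (le_div_iff₀ (mul_pos (sum_sq_pos_of_ne_zero hξ) (sum_triR_ipk_sq_pos hη))).2
      (lamTri_mul_le_Qform a b ξ η)

/- `|e^{iρ·k} - 1| = |ρ·(e^{ik} - 1)|` for the six bonds; for `ρ = ±(e₂ - e₁)` this is
`|e^{ik₂} - e^{ik₁}| = |e^{i(k₂ - k₁)} - 1|`. -/
lemma cos_sub_one_sq_add_sin_sq_ipk {ρ : Fin 2 → ℤ} (hρ : ρ ∈ triR) (k : Fin 2 → ℝ) :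
    (cos (ipk ρ k) - 1) ^ 2 + sin (ipk ρ k) ^ 2 =
      ipk ρ (fun i => cos (k i) - 1) ^ 2 + ipk ρ (fun i => sin (k i)) ^ 2 := by
  simp only [triR, Finset.mem_insert, Finset.mem_singleton] at hρ
  rcases hρ with rfl | rfl | rfl | rfl | rfl | rfl <;>
    simp only [ipk_cons, Int.cast_one, Int.cast_zero, Int.cast_neg, one_mul, zero_mul, neg_mul,
      add_zero, zero_add, cos_neg, sin_neg, cos_add, sin_add] <;>
    first
    | ring1
    | linear_combination (sin (k 1) ^ 2 + cos (k 1) ^ 2 - 1) * sin_sq_add_cos_sq (k 0)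

lemma Qform_cos_add_Qform_sin (a b : ℝ) (ξ k : Fin 2 → ℝ) :
    Qform (triK a b) ξ (fun ρ => cos (ipk ρ.1 k) - 1) + Qform (triK a b) ξ (fun ρ => sin (ipk ρ.1 k)) =
      Qform (triK a b) ξ (fun ρ => ipk ρ.1 (fun i => cos (k i) - 1)) +
        Qform (triK a b) ξ (fun ρ => ipk ρ.1 (fun i => sin (k i))) := by
  simp only [Qform_triK, ← Finset.sum_add_distrib, ← add_mul]
  exact Finset.sum_congr rfl fun ρ _ => by rw [cos_sub_one_sq_add_sin_sq_ipk ρ.2]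

lemma sum_cos_add_sum_sin (k : Fin 2 → ℝ) :
    ∑ ρ : ↥triR, (cos (ipk ρ.1 k) - 1) ^ 2 + ∑ ρ : ↥triR, sin (ipk ρ.1 k) ^ 2 =
      ∑ ρ : ↥triR, ipk ρ.1 (fun i => cos (k i) - 1) ^ 2 +
        ∑ ρ : ↥triR, ipk ρ.1 (fun i => sin (k i)) ^ 2 := by
  simp only [← Finset.sum_add_distrib]
  exact Finset.sum_congr rfl fun ρ _ => cos_sub_one_sq_add_sin_sq_ipk ρ.2 k

lemma cos_sub_one_ne_zero {ι : Type*} {k : ι → ℝ} (hk : k ≠ 0)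
    (hbox : ∀ i, k i ∈ Set.Ico 0 (2 * π)) : (fun i => cos (k i) - 1) ≠ 0 := by
  obtain ⟨i, hi⟩ := Function.ne_iff.1 hk
  refine Function.ne_iff.2 ⟨i, sub_ne_zero.2 fun h => hi ?_⟩
  exact (cos_eq_one_iff_of_lt_of_lt (by linarith [(hbox i).1, pi_pos]) (hbox i).2).1 h

lemma lamAtomCS_triK (a b : ℝ) : lamAtomCS (triK a b) = lamTri a b := by
  refine IsLeast.csInf_eq ⟨?_, ?_⟩
  · obtain ⟨ξ, hξ, h⟩ := exists_lamTri_eq_div a b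
    have hx : (fun i => cos (![π, 0] i) - 1) = ![-2, 0] := by
      ext i; fin_cases i <;> norm_num
    have hy : (fun i => sin (![π, 0] i)) = 0 := by
      ext i; fin_cases i <;> simp
    refine ⟨ξ, ![π, 0], hξ, by simp [pi_ne_zero], fun i => ?_, ?_⟩
    · fin_cases i <;> simp [pi_pos.le, pi_pos]
    · rw [Qform_cos_add_Qform_sin, sum_cos_add_sum_sin, hx, hy]
      have h0 : ∀ ρ : Fin 2 → ℤ, ipk ρ 0 = 0 := by simp [ipk]
      simpa [h0, Qform] using h
  · rintro r ⟨ξ, k, hξ, hk, hbox, rfl⟩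
    rw [Qform_cos_add_Qform_sin, sum_cos_add_sum_sin]
    have hξ' := sum_sq_pos_of_ne_zero hξ
    have hx := sum_triR_ipk_sq_pos (cos_sub_one_ne_zero hk hbox)
    have hy : 0 ≤ ∑ ρ : ↥triR, ipk ρ.1 (fun i => sin (k i)) ^ 2 := by positivity
    rw [le_div_iff₀ (mul_pos hξ' (add_pos_of_pos_of_nonneg hx hy))]
    linarith [lamTri_mul_le_Qform a b ξ (fun i => cos (k i) - 1),
      lamTri_mul_le_Qform a b ξ (fun i => sin (k i))]

theorem triangular_lattice_stability_constants_general
    (V₀ : ℝ → ℝ)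
    (t : ℝ) :
    lamAtomCS (triK (deriv V₀ t / t) (deriv (deriv V₀) t)) =
      lamTildeLH (triK (deriv V₀ t / t) (deriv (deriv V₀) t)) ∧
    lamTildeLH (triK (deriv V₀ t / t) (deriv (deriv V₀) t)) =
      1 / 2 * (deriv (deriv V₀) t + deriv V₀ t / t) -
        1 / 4 * |deriv (deriv V₀) t - deriv V₀ t / t| := by
  rw [lamAtomCS_triK, lamTildeLH_triK]
  exact ⟨rfl, rfl⟩

/-- for the triangular lattice with nearest-neighbour pair
interactions `V₀`, at the uniform dilation `M(t) = tM` the atomistic and the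
modified Legendre–Hadamard stability constants coincide and equal
`½(V₀''(t) + V₀'(t)/t) − ¼|V₀''(t) − V₀'(t)/t|`. -/
theorem triangular_lattice_stability_constants
    (V₀ : ℝ → ℝ) (hV₀ : ContDiffOn ℝ 2 V₀ (Set.Ioi 0))
    (t : ℝ) (ht : 0 < t) :
    lamAtomCS (triK (deriv V₀ t / t) (deriv (deriv V₀) t)) =
      lamTildeLH (triK (deriv V₀ t / t) (deriv (deriv V₀) t)) ∧
    lamTildeLH (triK (deriv V₀ t / t) (deriv (deriv V₀) t)) =
      1 / 2 * (deriv (deriv V₀) t + deriv V₀ t / t) -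
        1 / 4 * |deriv (deriv V₀) t - deriv V₀ t / t| :=
  triangular_lattice_stability_constants_general V₀ t

end
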